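/- Let J ≥ 1, α, τ, h > 0, λ ∈ ℝ, let A = −Â with Â the J×J real symmetric tridiagonal matrix with 2 on the diagonal and −1 off the diagonal, and for v ∈ ℂ^J set f(v) = (−(α/2) I + i λ F(v)) τ. Suppose u, w ∈ ℂ^J satisfy the (noise-free) fully discrete scheme relation w − e^{f(u)} u = (i τ /(2h²)) A ( w + e^{f(u)} u ) − (ατ/4)( w + e^{f(u)} u ). Then ‖w‖² = e^{−ατ} ‖u‖² − (ατ/4) ‖w + e^{f(u)} u‖², and in particular ‖w‖² ≤ e^{−ατ} ‖u‖². -/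

import Mathlib

/-- The `J × J` tridiagonal matrix with `2` on the diagonal and `-1` on the
sub- and superdiagonals. -/
def Ahat (J : ℕ) : Matrix (Fin J) (Fin J) ℝ :=
  Matrix.of fun i j =>
    if i = j then 2
    else if (i.val : ℤ) - j.val = 1 ∨ (j.val : ℤ) - i.val = 1 then -1
    else 0

/-- The diagonal matrix `f(v) = (-(α/2) I + i λ F(v)) τ`,
where `F(v) = diag(|v_1|², …, |v_J|²)`. -/
noncomputable def fmat (J : ℕ) (α τ lam : ℝ) (v : Fin J → ℂ) :
    Matrix (Fin J) (Fin J) ℂ :=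
  (τ : ℂ) • ((-(α / 2 : ℂ)) • (1 : Matrix (Fin J) (Fin J) ℂ)
    + (Complex.I * (lam : ℂ)) • Matrix.diagonal (fun j => ((‖v j‖ : ℂ)) ^ 2))

/-!
Write `v = e^{f(u)} u` and pair the scheme with `x = w + v`, i.e. apply `Re ⟨x, ·⟩`.
On the left, `Re ⟨w + v, w - v⟩ = ‖w‖² - ‖v‖²`. On the right, `A` is Hermitian, so
`⟨x, A x⟩` is real and the purely imaginary factor `iτ/(2h²)` kills it, leaving
`-(ατ/4)‖x‖²`. Finally `e^{f(u)}` is diagonal with entries of modulus `e^{-ατ/2}`, so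
`‖e^{f(u)} u‖² = e^{-ατ}‖u‖²`.
-/

open Matrix Complex

lemma Complex.re_conj_add_mul_sub (a b : ℂ) :
    (starRingEnd ℂ (a + b) * (a - b)).re = ‖a‖ ^ 2 - ‖b‖ ^ 2 := by
  simp only [Complex.sq_norm, normSq_apply, mul_re, conj_re, conj_im, add_re, add_im, sub_re,
    sub_im]
  ring

lemma Matrix.re_star_dotProduct_self {ι : Type*} [Fintype ι] (x : ι → ℂ) :
    (star x ⬝ᵥ x).re = ∑ j, ‖x j‖ ^ 2 := by
  simp only [dotProduct, Pi.star_apply, Complex.star_def, re_sum,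
    mul_comm (starRingEnd ℂ _), mul_conj, Complex.normSq_eq_norm_sq, ofReal_re]

lemma Matrix.re_star_add_dotProduct_sub {ι : Type*} [Fintype ι] (w v : ι → ℂ) :
    (star (w + v) ⬝ᵥ (w - v)).re = ∑ j, ‖w j‖ ^ 2 - ∑ j, ‖v j‖ ^ 2 := by
  simp only [dotProduct, re_sum, ← Finset.sum_sub_distrib]
  exact Finset.sum_congr rfl fun j _ => Complex.re_conj_add_mul_sub (w j) (v j)

theorem Matrix.IsHermitian.sum_norm_sq_eq_of_sub_eq {ι : Type*} [Fintype ι]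
    {A : Matrix ι ι ℂ} (hA : A.IsHermitian) {c : ℂ} (hc : c.re = 0) (r : ℝ) {w v : ι → ℂ}
    (h : w - v = c • A *ᵥ (w + v) - (r : ℂ) • (w + v)) :
    ∑ j, ‖w j‖ ^ 2 = ∑ j, ‖v j‖ ^ 2 - r * ∑ j, ‖w j + v j‖ ^ 2 := by
  have hreal : (star (w + v) ⬝ᵥ A *ᵥ (w + v)).im = 0 := hA.im_star_dotProduct_mulVec_self _
  have hpair := congrArg (fun y => (star (w + v) ⬝ᵥ y).re) h
  simp only [re_star_add_dotProduct_sub] at hpair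
  simp only [dotProduct_sub, dotProduct_smul, smul_eq_mul, sub_re, mul_re, hc, hreal,
    ofReal_re, ofReal_im, re_star_dotProduct_self, Pi.add_apply] at hpair
  linarith

lemma Matrix.sum_norm_sq_exp_diagonal_mulVec {ι : Type*} [Fintype ι] [DecidableEq ι]
    {d : ι → ℂ} {r : ℝ} (hd : ∀ j, (d j).re = r) (u : ι → ℂ) :
    ∑ j, ‖(NormedSpace.exp (diagonal d) *ᵥ u) j‖ ^ 2 = Real.exp (2 * r) * ∑ j, ‖u j‖ ^ 2 := by
  simp only [exp_diagonal, mulVec_diagonal, Finset.mul_sum]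
  refine Finset.sum_congr rfl fun j _ => ?_
  rw [Pi.coe_exp, ← Complex.exp_eq_exp_ℂ, norm_mul, mul_pow, Complex.norm_exp, hd,
    ← Real.exp_nat_mul]
  ring_nf

lemma Ahat_isSymm (J : ℕ) : (Ahat J).IsSymm :=
  IsSymm.ext fun i j => by
    simp only [Ahat, of_apply, eq_comm (a := i), or_comm]

lemma isHermitian_neg_map_Ahat (J : ℕ) : (-((Ahat J).map (fun a => (a : ℂ)))).IsHermitian :=
  ((isHermitian_iff_isSymm.2 (Ahat_isSymm J)).map _ fun a => (Complex.conj_ofReal a).symm).neg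

lemma fmat_eq_diagonal (J : ℕ) (α τ lam : ℝ) (v : Fin J → ℂ) :
    fmat J α τ lam v
      = diagonal fun j => ((-(α * τ / 2) : ℝ) : ℂ) + ((τ * lam * ‖v j‖ ^ 2 : ℝ) : ℂ) * I := by
  ext i j
  rcases eq_or_ne i j with rfl | hij
  · simp only [fmat, Matrix.smul_apply, Matrix.add_apply, neg_smul, Matrix.neg_apply,
      one_apply_eq, diagonal_apply_eq, smul_eq_mul]
    push_cast
    ring
  · simp [fmat, hij]

theorem stmt_5_general (J : ℕ) (α τ h : ℝ) (hα : 0 < α) (hτ : 0 < τ)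
    (lam : ℝ) (A : Matrix (Fin J) (Fin J) ℂ)
    (hA : A = -((Ahat J).map (fun a => (a : ℂ))))
    (u w : Fin J → ℂ)
    (hscheme : w - (NormedSpace.exp (fmat J α τ lam u)).mulVec u
      = (Complex.I * (τ : ℂ) / ((2 * h ^ 2 : ℝ) : ℂ))
          • A.mulVec (w + (NormedSpace.exp (fmat J α τ lam u)).mulVec u)
        - ((α * τ / 4 : ℝ) : ℂ) • (w + (NormedSpace.exp (fmat J α τ lam u)).mulVec u)) :
    (∑ j, ‖w j‖ ^ 2
      = Real.exp (-(α * τ)) * ∑ j, ‖u j‖ ^ 2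
        - (α * τ / 4) * ∑ j,
            ‖w j + (NormedSpace.exp (fmat J α τ lam u)).mulVec u j‖ ^ 2)
    ∧ ∑ j, ‖w j‖ ^ 2 ≤ Real.exp (-(α * τ)) * ∑ j, ‖u j‖ ^ 2 := by
  have hc : (Complex.I * (τ : ℂ) / ((2 * h ^ 2 : ℝ) : ℂ)).re = 0 := by
    rw [Complex.div_ofReal_re]
    simp
  have hdecay : ∑ j, ‖(NormedSpace.exp (fmat J α τ lam u) *ᵥ u) j‖ ^ 2
      = Real.exp (-(α * τ)) * ∑ j, ‖u j‖ ^ 2 := by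
    rw [fmat_eq_diagonal, sum_norm_sq_exp_diagonal_mulVec (r := -(α * τ / 2))
      fun _ => by simp only [add_re, ofReal_re, mul_I_re, ofReal_im, neg_zero, add_zero]]
    ring_nf
  have henergy := (hA ▸ isHermitian_neg_map_Ahat J).sum_norm_sq_eq_of_sub_eq hc _ hscheme
  rw [hdecay] at henergy
  refine ⟨henergy, ?_⟩
  have hdissipation : 0 ≤ α * τ / 4 * ∑ j,
      ‖w j + (NormedSpace.exp (fmat J α τ lam u) *ᵥ u) j‖ ^ 2 := by positivity
  linarith

/-- if `u, w ∈ ℂ^J` satisfy the noise-free fully discrete scheme relation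
`w - e^{f(u)} u = (iτ/(2h²)) A (w + e^{f(u)} u) - (ατ/4)(w + e^{f(u)} u)` with `A = -Â`,
then `‖w‖² = e^{-ατ} ‖u‖² - (ατ/4) ‖w + e^{f(u)} u‖²`, and in particular
`‖w‖² ≤ e^{-ατ} ‖u‖²`. -/
theorem stmt_5 (J : ℕ) (hJ : 1 ≤ J) (α τ h : ℝ) (hα : 0 < α) (hτ : 0 < τ) (hh : 0 < h)
    (lam : ℝ) (A : Matrix (Fin J) (Fin J) ℂ)
    (hA : A = -((Ahat J).map (fun a => (a : ℂ))))
    (u w : Fin J → ℂ)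
    (hscheme : w - (NormedSpace.exp (fmat J α τ lam u)).mulVec u
      = (Complex.I * (τ : ℂ) / ((2 * h ^ 2 : ℝ) : ℂ))
          • A.mulVec (w + (NormedSpace.exp (fmat J α τ lam u)).mulVec u)
        - ((α * τ / 4 : ℝ) : ℂ) • (w + (NormedSpace.exp (fmat J α τ lam u)).mulVec u)) :
    (∑ j, ‖w j‖ ^ 2
      = Real.exp (-(α * τ)) * ∑ j, ‖u j‖ ^ 2
        - (α * τ / 4) * ∑ j,
            ‖w j + (NormedSpace.exp (fmat J α τ lam u)).mulVec u j‖ ^ 2)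
    ∧ ∑ j, ‖w j‖ ^ 2 ≤ Real.exp (-(α * τ)) * ∑ j, ‖u j‖ ^ 2 :=
  stmt_5_general J α τ h hα hτ lam A hA u w hscheme
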